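/- arXiv:0910.5850 — 3 statements merged into one kernel-verified Lean document; each statement's English description precedes it below -/
import Mathlib

section
/- Let M be an N-function satisfying the Δ₂-condition and such that M(λ)/λ² is nondecreasing on (0,∞). Then the Young-type inequality (M(u)/u²)·v·w ≤ M(u) + M(v) + M(w) holds for all u, v, w > 0; that is, condition (Y) holds with P = Q = M. -/
open MeasureTheory Filter Set

noncomputable section

/-- An `N`-function: a continuous convex function `M : [0,∞) → [0,∞)` with `M(0) = 0`,
`lim_{λ→0} M(λ)/λ = 0` and `lim_{λ→∞} λ/M(λ) = 0`. -/
def IsNFunction (M : ℝ → ℝ) : Prop :=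
  ContinuousOn M (Ici 0) ∧ ConvexOn ℝ (Ici 0) M ∧ M 0 = 0 ∧
  (∀ x ≥ (0:ℝ), 0 ≤ M x) ∧
  Tendsto (fun l => M l / l) (nhdsWithin 0 (Ioi 0)) (nhds 0) ∧
  Tendsto (fun l => l / M l) atTop (nhds 0)

/-- The Δ₂-condition. -/
def Delta2 (M : ℝ → ℝ) : Prop := ∃ c > 0, ∀ l > (0:ℝ), M (2 * l) ≤ c * M l

/-! With `m = max u v w`, monotonicity of `M(λ)/λ²` gives
`M(u)/u² · v · w ≤ M(m)/m² · m · m = M(m)`, and `M(m)` is one of the three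
nonnegative summands on the right. -/

lemma IsNFunction.nonneg {M : ℝ → ℝ} (hN : IsNFunction M) {x : ℝ} (hx : 0 ≤ x) : 0 ≤ M x :=
  hN.2.2.2.1 x hx

lemma apply_max_max_le_add_add {f : ℝ → ℝ} {u v w : ℝ} (hu : 0 ≤ f u) (hv : 0 ≤ f v)
    (hw : 0 ≤ f w) : f (max u (max v w)) ≤ f u + f v + f w := by
  rcases max_choice u (max v w) with h | h <;> rw [h]
  · linarith
  · rcases max_choice v w with h' | h' <;> rw [h'] <;> linarith

lemma div_sq_mul_mul_le_apply_max {f : ℝ → ℝ} (hmono : MonotoneOn (fun l => f l / l ^ 2) (Ioi 0))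
    {u v w : ℝ} (hu : 0 < u) (hv : 0 < v) (hw : 0 < w) (hfu : 0 ≤ f u) :
    f u / u ^ 2 * v * w ≤ f (max u (max v w)) := by
  set m := max u (max v w)
  have hum : u ≤ m := le_max_left _ _
  have hvm : v ≤ m := (le_max_left _ _).trans (le_max_right _ _)
  have hwm : w ≤ m := (le_max_right _ _).trans (le_max_right _ _)
  have hm : 0 < m := hu.trans_le hum
  have hratio : f u / u ^ 2 ≤ f m / m ^ 2 := hmono hu hm hum
  have hratio_m : 0 ≤ f m / m ^ 2 := (by positivity : 0 ≤ f u / u ^ 2).trans hratio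
  calc f u / u ^ 2 * v * w ≤ f m / m ^ 2 * m * m := by gcongr
    _ = f m := by field_simp

theorem statement8_general (M : ℝ → ℝ) (hN : IsNFunction M)
    (hmono : MonotoneOn (fun l => M l / l ^ 2) (Ioi 0)) :
    ∀ u > (0:ℝ), ∀ v > (0:ℝ), ∀ w > (0:ℝ),
      M u / u ^ 2 * v * w ≤ M u + M v + M w := by
  intro u hu v hv w hw
  calc M u / u ^ 2 * v * w ≤ M (max u (max v w)) :=
        div_sq_mul_mul_le_apply_max hmono hu hv hw (hN.nonneg hu.le)
    _ ≤ M u + M v + M w :=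
        apply_max_max_le_add_add (hN.nonneg hu.le) (hN.nonneg hv.le) (hN.nonneg hw.le)

/-- Remark 2.1(1): if `M` is an `N`-function satisfying the Δ₂-condition with
`M(λ)/λ²` nondecreasing, then the Young-type inequality (Y) holds with `P = Q = M`. -/
theorem statement8 (M : ℝ → ℝ) (hN : IsNFunction M) (hΔ : Delta2 M)
    (hmono : MonotoneOn (fun l => M l / l ^ 2) (Ioi 0)) :
    ∀ u > (0:ℝ), ∀ v > (0:ℝ), ∀ w > (0:ℝ),
      M u / u ^ 2 * v * w ≤ M u + M v + M w :=
  statement8_general M hN hmono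
end
end

section
/- For every a ∈ ℝ and b > 0, lim_{r→∞} ( ∫_r^∞ x^a·e^{-x^b} dx ) / ( r^{a+1-b}·e^{-r^b} ) = 1/b. -/
/-!
Both the tail `∫_r^∞ x^a e^{-x^b} dx` and `r^{a+1-b} e^{-r^b}` tend to `0`, with derivatives
`-r^a e^{-r^b}` and `-r^a e^{-r^b} (b - (a+1-b) r^{-b})`; by L'Hôpital's rule the ratio tends to
`lim 1 / (b - (a+1-b) r^{-b}) = 1 / b`.
-/

open MeasureTheory Filter Set Real Topology Asymptotics

section TailIntegral

variable {E : Type*} [NormedAddCommGroup E] [NormedSpace ℝ E] {f : ℝ → E} {a : ℝ}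

theorem tendsto_setIntegral_Ioi_atTop (hf : IntegrableOn f (Ioi a)) :
    Tendsto (fun r => ∫ x in Ioi r, f x) atTop (𝓝 0) := by
  have h := tendsto_setIntegral_of_antitone (fun r => measurableSet_Ioi)
    (fun _ _ hrs => Ioi_subset_Ioi hrs) ⟨a, hf⟩
  have hempty : ⋂ r : ℝ, Ioi r = ∅ := iInter_eq_empty_iff.2 fun x => ⟨x, lt_irrefl x⟩
  rwa [hempty, Measure.restrict_empty, integral_zero_measure] at h

theorem hasDerivAt_setIntegral_Ioi [CompleteSpace E] {r : ℝ} (hf : IntegrableOn f (Ioi a))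
    (har : a < r) (hcont : ContinuousAt f r) :
    HasDerivAt (fun t => ∫ x in Ioi t, f x) (-f r) r := by
  have hprim : HasDerivAt (fun t => ∫ x in a..t, f x) (f r) r :=
    intervalIntegral.integral_hasDerivAt_right
      ((intervalIntegrable_iff_integrableOn_Ioc_of_le har.le).2 (hf.mono_set Ioc_subset_Ioi_self))
      ⟨Ioi a, Ioi_mem_nhds har, hf.aestronglyMeasurable⟩ hcont
  refine (hprim.const_sub (∫ x in Ioi a, f x)).congr_of_eventuallyEq ?_
  filter_upwards [Ioi_mem_nhds har] with t ht
  rw [← intervalIntegral.integral_Ioi_sub_Ioi hf (le_of_lt ht), sub_sub_cancel]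

end TailIntegral

theorem continuousAt_rpow_mul_exp_neg_rpow (a b : ℝ) {x : ℝ} (hx : x ≠ 0) :
    ContinuousAt (fun x : ℝ => x ^ a * exp (-x ^ b)) x :=
  (continuousAt_rpow_const x a (.inl hx)).mul (continuousAt_rpow_const x b (.inl hx)).neg.rexp

theorem tendsto_rpow_mul_exp_neg_rpow_atTop_nhds_zero (c : ℝ) {b : ℝ} (hb : 0 < b) :
    Tendsto (fun x : ℝ => x ^ c * exp (-x ^ b)) atTop (𝓝 0) := by
  refine ((tendsto_rpow_mul_exp_neg_mul_atTop_nhds_zero (c / b) 1 one_pos).comp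
    (tendsto_rpow_atTop hb)).congr' ?_
  filter_upwards [eventually_gt_atTop 0] with x hx
  simp [← rpow_mul hx.le, mul_div_cancel₀ _ hb.ne']

theorem integrableOn_Ioi_rpow_mul_exp_neg_rpow (a : ℝ) {b r : ℝ} (hb : 0 < b) (hr : 0 < r) :
    IntegrableOn (fun x : ℝ => x ^ a * exp (-x ^ b)) (Ioi r) := by
  have hcont : ContinuousOn (fun x : ℝ => x ^ a * exp (-x ^ b)) (Ici r) := fun x hx =>
    (continuousAt_rpow_mul_exp_neg_rpow a b (hr.trans_le hx).ne').continuousWithinAt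
  have hO : (fun x : ℝ => x ^ a * exp (-x ^ b)) =O[atTop] fun x => x ^ (-2 : ℝ) := by
    refine isBigO_of_div_tendsto_nhds ?_ 0
      ((tendsto_rpow_mul_exp_neg_rpow_atTop_nhds_zero (a + 2) hb).congr' ?_)
    · filter_upwards [eventually_gt_atTop 0] with x hx h
      exact absurd h (rpow_pos_of_pos hx _).ne'
    · filter_upwards [eventually_gt_atTop 0] with x hx
      simp only [Pi.div_apply]
      rw [rpow_add hx, rpow_neg hx.le, rpow_two]
      field_simp
  exact ((hcont.locallyIntegrableOn measurableSet_Ici).integrableOn_of_isBigO_atTop hO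
    ⟨Ioi 1, Ioi_mem_atTop 1, integrableOn_Ioi_rpow_of_lt (by norm_num) one_pos⟩).mono_set
    Ioi_subset_Ici_self

theorem hasDerivAt_rpow_mul_exp_neg_rpow (a b : ℝ) {r : ℝ} (hr : 0 < r) :
    HasDerivAt (fun x : ℝ => x ^ (a + 1 - b) * exp (-x ^ b))
      (-(r ^ a * exp (-r ^ b)) * (b - (a + 1 - b) * r ^ (-b))) r := by
  have h := (hasDerivAt_rpow_const (p := a + 1 - b) (.inl hr.ne')).mul
    (hasDerivAt_rpow_const (x := r) (p := b) (.inl hr.ne')).neg.exp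
  have e1 : r ^ (a + 1 - b - 1) = r ^ a * r ^ (-b) := by rw [← rpow_add hr]; ring_nf
  have e2 : r ^ (a + 1 - b) * r ^ (b - 1) = r ^ a := by rw [← rpow_add hr]; ring_nf
  refine h.congr_deriv ?_
  simp only [Pi.neg_apply]
  rw [e1]
  linear_combination (-b) * exp (-r ^ b) * e2

/-- Asymptotics of the incomplete Gamma-type integral:
`∫_r^∞ x^a e^{-x^b} dx ∼ (1/b)·r^{a+1-b}·e^{-r^b}` as `r → ∞`. -/
theorem statement18 (a b : ℝ) (hb : 0 < b) :
    Tendsto (fun r : ℝ =>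
        (∫ x in Ioi r, x ^ a * Real.exp (-(x ^ b))) /
          (r ^ (a + 1 - b) * Real.exp (-(r ^ b))))
      atTop (nhds (1 / b)) := by
  have hint := integrableOn_Ioi_rpow_mul_exp_neg_rpow a hb one_pos
  have hq : Tendsto (fun r : ℝ => b - (a + 1 - b) * r ^ (-b)) atTop (𝓝 b) := by
    simpa using tendsto_const_nhds.sub ((tendsto_rpow_neg_atTop hb).const_mul (a + 1 - b))
  have hq_pos : ∀ᶠ r in atTop, 0 < b - (a + 1 - b) * r ^ (-b) := hq.eventually (lt_mem_nhds hb)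
  refine HasDerivAt.lhopital_zero_atTop (f' := fun r => -(r ^ a * exp (-r ^ b)))
    (g' := fun r => -(r ^ a * exp (-r ^ b)) * (b - (a + 1 - b) * r ^ (-b))) ?_ ?_ ?_
    (tendsto_setIntegral_Ioi_atTop hint) (tendsto_rpow_mul_exp_neg_rpow_atTop_nhds_zero _ hb) ?_
  · filter_upwards [eventually_gt_atTop 1] with r hr
    exact hasDerivAt_setIntegral_Ioi hint hr
      (continuousAt_rpow_mul_exp_neg_rpow a b (by positivity))
  · filter_upwards [eventually_gt_atTop 0] with r hr
    exact hasDerivAt_rpow_mul_exp_neg_rpow a b hr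
  · filter_upwards [eventually_gt_atTop 0, hq_pos] with r hr hqr
    have : 0 < r ^ a * exp (-r ^ b) := by positivity
    exact mul_ne_zero (neg_ne_zero.2 this.ne') hqr.ne'
  · refine (tendsto_const_nhds.div hq hb.ne').congr' ?_
    filter_upwards [eventually_gt_atTop 0, hq_pos] with r hr hqr
    have : 0 < r ^ a * exp (-r ^ b) := by positivity
    simp only [Pi.div_apply]
    field_simp
end

section
/- For every a < 1, b > 0 and C > 0, lim_{r→∞} ( ∫_0^r x^{-a}·e^{C·x^b} dx ) / ( e^{C·r^b}·r^{-(a+b-1)} ) = 1/(bC). -/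
open MeasureTheory Filter Set Real Asymptotics Topology

/-!
Put `G r = exp (C r^b) r^(1-a-b)`. Then `G → ∞` and
`G' x = (b C + (1-a-b) x^(-b)) x^(-a) exp (C x^b) ~ b C x^(-a) exp (C x^b)`.
By a continuous Stolz–Cesàro argument (integrals of equivalent functions, positive with divergent
integral, are equivalent) `b C ∫_1^r x^(-a) exp (C x^b) dx ~ G r - G 1 ~ G r`, and the integral
over `(0, 1)` is a finite constant because `a < 1`.
-/

theorem isLittleO_intervalIntegral_of_isLittleO {f g : ℝ → ℝ} {a : ℝ}
    (hf : ContinuousOn f (Ici a)) (hg : ContinuousOn g (Ici a))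
    (hfg : f =o[atTop] g) (hg_nonneg : ∀ᶠ x in atTop, 0 ≤ g x)
    (hg_int : Tendsto (fun r => ∫ x in a..r, g x) atTop atTop) :
    (fun r => ∫ x in a..r, f x) =o[atTop] fun r => ∫ x in a..r, g x := by
  have hint {φ : ℝ → ℝ} (hφ : ContinuousOn φ (Ici a)) {s t : ℝ} (hs : a ≤ s)
      (ht : a ≤ t) : IntervalIntegrable φ volume s t :=
    (hφ.mono fun _ hx => (le_min hs ht).trans hx.1).intervalIntegrable
  refine IsLittleO.of_bound fun ε hε => ?_
  obtain ⟨R₀, hR₀⟩ := eventually_atTop.1 ((hfg.bound (half_pos hε)).and hg_nonneg)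
  set R := max R₀ a
  have haR : a ≤ R := le_max_right _ _
  filter_upwards [eventually_ge_atTop R, hg_int.eventually_ge_atTop 0,
    hg_int.eventually_ge_atTop (2 / ε * (‖∫ x in a..R, f x‖ - ε / 2 * ∫ x in a..R, g x))]
    with r hRr hg_pos hcr
  have har : a ≤ r := haR.trans hRr
  have hbound : ‖∫ x in R..r, f x‖ ≤ ∫ x in R..r, ε / 2 * g x := by
    refine intervalIntegral.norm_integral_le_of_norm_le hRr (ae_of_all _ fun x hx => ?_)
      ((hint hg haR har).const_mul _)
    obtain ⟨hfx, hgx⟩ := hR₀ x ((le_max_left _ _).trans hx.1.le)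
    rwa [Real.norm_of_nonneg hgx] at hfx
  calc ‖∫ x in a..r, f x‖
      = ‖(∫ x in a..R, f x) + ∫ x in R..r, f x‖ := by
        rw [intervalIntegral.integral_add_adjacent_intervals (hint hf le_rfl haR)
          (hint hf haR har)]
    _ ≤ ‖∫ x in a..R, f x‖ + ε / 2 * ((∫ x in a..r, g x) - ∫ x in a..R, g x) := by
        rw [intervalIntegral.integral_interval_sub_left (hint hg le_rfl har)
          (hint hg le_rfl haR), ← intervalIntegral.integral_const_mul]
        exact (norm_add_le _ _).trans (add_le_add_right hbound _)
    _ ≤ ε * ‖∫ x in a..r, g x‖ := by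
        rw [div_mul_eq_mul_div, div_le_iff₀ hε] at hcr
        rw [Real.norm_of_nonneg hg_pos]
        linarith

theorem isEquivalent_intervalIntegral_of_hasDerivAt {φ g G : ℝ → ℝ} {a : ℝ}
    (hφ : ContinuousOn φ (Ici a)) (hg : ContinuousOn g (Ici a))
    (hG : ∀ x ∈ Ici a, HasDerivAt G (g x) x) (hg_nonneg : ∀ᶠ x in atTop, 0 ≤ g x)
    (hG_tendsto : Tendsto G atTop atTop) (hφg : φ ~[atTop] g) :
    (fun r => ∫ x in a..r, φ x) ~[atTop] G := by
  have hsub {r : ℝ} (hr : a ≤ r) : uIcc a r ⊆ Ici a := by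
    rw [uIcc_of_le hr]; exact Icc_subset_Ici_self
  have hg_integral : (fun r => ∫ x in a..r, g x) ~[atTop] G := by
    have hGa : (fun _ => G a) =o[atTop] G :=
      isLittleO_const_left.2 (Or.inr (tendsto_norm_atTop_atTop.comp hG_tendsto))
    refine (IsEquivalent.refl.sub_isLittleO hGa).congr_left ?_
    filter_upwards [eventually_ge_atTop a] with r hr
    exact (intervalIntegral.integral_eq_sub_of_hasDerivAt (fun x hx => hG x (hsub hr hx))
      (hg.mono (hsub hr)).intervalIntegrable).symm
  have herror := isLittleO_intervalIntegral_of_isLittleO (f := fun x => φ x - g x)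
    (hφ.sub hg) hg hφg hg_nonneg (hg_integral.symm.tendsto_atTop hG_tendsto)
  refine IsEquivalent.trans (herror.congr' ?_ EventuallyEq.rfl) hg_integral
  filter_upwards [eventually_ge_atTop a] with r hr
  exact intervalIntegral.integral_sub (hφ.mono (hsub hr)).intervalIntegrable
    (hg.mono (hsub hr)).intervalIntegrable

theorem tendsto_exp_mul_rpow_mul_rpow_atTop {b C : ℝ} (hb : 0 < b) (hC : 0 < C) (p : ℝ) :
    Tendsto (fun r : ℝ => exp (C * r ^ b) * r ^ p) atTop atTop := by
  have h := (tendsto_exp_mul_div_rpow_atTop (-(p / b)) C hC).comp (tendsto_rpow_atTop hb)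
  refine h.congr' ?_
  filter_upwards [eventually_gt_atTop 0] with r hr
  rw [Function.comp_apply, ← rpow_mul hr.le, mul_neg, mul_div_cancel₀ _ hb.ne', rpow_neg hr.le,
    div_inv_eq_mul]

theorem hasDerivAt_exp_mul_rpow_mul_rpow (a b C : ℝ) {x : ℝ} (hx : 0 < x) :
    HasDerivAt (fun y => exp (C * y ^ b) * y ^ (-(a + b - 1)))
      ((b * C + -(a + b - 1) * x ^ (-b)) * (x ^ (-a) * exp (C * x ^ b))) x := by
  have hexp := ((hasDerivAt_rpow_const (p := b) (Or.inl hx.ne')).const_mul C).exp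
  refine (hexp.mul (hasDerivAt_rpow_const (p := -(a + b - 1)) (Or.inl hx.ne'))).congr_deriv ?_
  have h₁ : x ^ (b - 1) * x ^ (-(a + b - 1)) = x ^ (-a) := by
    rw [← rpow_add hx]; ring_nf
  have h₂ : x ^ (-(a + b - 1) - 1) = x ^ (-b) * x ^ (-a) := by
    rw [← rpow_add hx]; ring_nf
  rw [h₂, ← h₁]
  ring

theorem continuousOn_rpow_mul_exp_mul_rpow (c b C : ℝ) :
    ContinuousOn (fun x : ℝ => x ^ c * exp (C * x ^ b)) (Ioi 0) := by
  have hpow (d : ℝ) : ContinuousOn (fun x : ℝ => x ^ d) (Ioi 0) :=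
    continuousOn_id.rpow_const fun _ hx => Or.inl (ne_of_gt hx)
  exact (hpow c).mul (continuous_exp.comp_continuousOn ((hpow b).const_smul C))

theorem continuousOn_deriv_exp_mul_rpow_mul_rpow (a b C : ℝ) :
    ContinuousOn (fun x : ℝ => (b * C + -(a + b - 1) * x ^ (-b)) * (x ^ (-a) * exp (C * x ^ b)))
      (Ioi 0) :=
  (continuousOn_const.add (continuousOn_const.mul
    (continuousOn_id.rpow_const fun _ hx => Or.inl (ne_of_gt hx)))).mul
    (continuousOn_rpow_mul_exp_mul_rpow _ _ _)

theorem intervalIntegrable_rpow_mul_exp_mul_rpow {c b : ℝ} (hc : -1 < c) (hb : 0 ≤ b)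
    (C r : ℝ) : IntervalIntegrable (fun x : ℝ => x ^ c * exp (C * x ^ b)) volume 0 r :=
  (intervalIntegral.intervalIntegrable_rpow' hc).mul_continuousOn
    (by fun_prop (disch := exact hb) : Continuous fun x : ℝ => exp (C * x ^ b)).continuousOn

theorem isEquivalent_integral_rpow_mul_exp_mul_rpow {a b C : ℝ} (ha : a < 1) (hb : 0 < b)
    (hC : 0 < C) :
    (fun r => b * C * ∫ x in Ioo 0 r, x ^ (-a) * exp (C * x ^ b)) ~[atTop]
      fun r => exp (C * r ^ b) * r ^ (-(a + b - 1)) := by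
  set p := -(a + b - 1)
  set f : ℝ → ℝ := fun x => x ^ (-a) * exp (C * x ^ b)
  set G : ℝ → ℝ := fun r => exp (C * r ^ b) * r ^ p
  have hK : 0 < b * C := mul_pos hb hC
  have hGtop : Tendsto G atTop atTop := tendsto_exp_mul_rpow_mul_rpow_atTop hb hC p
  have hfactor : Tendsto (fun x : ℝ => b * C + p * x ^ (-b)) atTop (𝓝 (b * C)) := by
    simpa using ((tendsto_rpow_neg_atTop hb).const_mul p).const_add (b * C)
  have hIci : Ici (1 : ℝ) ⊆ Ioi 0 := fun _ hx => mem_Ioi.2 (zero_lt_one.trans_le hx)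
  have hf_cont : ContinuousOn f (Ici 1) := (continuousOn_rpow_mul_exp_mul_rpow _ _ _).mono hIci
  have hderiv_nonneg : ∀ᶠ x in atTop, 0 ≤ (b * C + p * x ^ (-b)) * f x := by
    filter_upwards [hfactor.eventually (eventually_gt_nhds hK), eventually_gt_atTop 0]
      with x hx hx₀
    exact mul_nonneg hx.le (mul_nonneg (rpow_nonneg hx₀.le _) (exp_pos _).le)
  have htail : (fun r => ∫ x in 1..r, b * C * f x) ~[atTop] G :=
    isEquivalent_intervalIntegral_of_hasDerivAt (continuousOn_const.mul hf_cont)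
      ((continuousOn_deriv_exp_mul_rpow_mul_rpow a b C).mono hIci)
      (fun x hx => hasDerivAt_exp_mul_rpow_mul_rpow a b C (hIci hx)) hderiv_nonneg hGtop
      (((isEquivalent_const_iff_tendsto hK.ne').2 hfactor).mul IsEquivalent.refl).symm
  have hhead : (fun _ => b * C * ∫ x in 0..1, f x) =o[atTop] G :=
    isLittleO_const_left.2 (Or.inr (tendsto_norm_atTop_atTop.comp hGtop))
  refine (htail.add_isLittleO hhead).congr_left ?_
  filter_upwards [eventually_ge_atTop 1] with r hr
  have hf_int : IntervalIntegrable f volume 1 r :=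
    (hf_cont.mono (by rw [uIcc_of_le hr]; exact Icc_subset_Ici_self)).intervalIntegrable
  rw [Pi.add_apply, ← integral_Ioc_eq_integral_Ioo,
    ← intervalIntegral.integral_of_le (zero_le_one.trans hr),
    ← intervalIntegral.integral_add_adjacent_intervals
      (intervalIntegrable_rpow_mul_exp_mul_rpow (by linarith) hb.le C 1) hf_int,
    intervalIntegral.integral_const_mul]
  ring

/-- Asymptotics of the growing exponential integral: for `a < 1`, `b, C > 0`,
`∫_0^r x^{-a} e^{C x^b} dx ∼ (1/(bC))·e^{C r^b}·r^{-(a+b-1)}` as `r → ∞`. -/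
theorem statement19 (a b C : ℝ) (ha : a < 1) (hb : 0 < b) (hC : 0 < C) :
    Tendsto (fun r : ℝ =>
        (∫ x in Ioo (0:ℝ) r, x ^ (-a) * Real.exp (C * x ^ b)) /
          (Real.exp (C * r ^ b) * r ^ (-(a + b - 1))))
      atTop (nhds (1 / (b * C))) := by
  have hG_ne : ∀ᶠ r : ℝ in atTop, exp (C * r ^ b) * r ^ (-(a + b - 1)) ≠ 0 :=
    (tendsto_exp_mul_rpow_mul_rpow_atTop hb hC _).eventually_ne_atTop 0
  have h := ((isEquivalent_iff_tendsto_one hG_ne).1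
    (isEquivalent_integral_rpow_mul_exp_mul_rpow ha hb hC)).const_mul (1 / (b * C))
  have hK : b * C ≠ 0 := (mul_pos hb hC).ne'
  rw [mul_one] at h
  refine h.congr fun r => ?_
  rw [Pi.div_apply]
  field_simp
end
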